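/- Let a₁ ≥ a₂ ≥ ⋯ ≥ a_M ≥ 0 be a nonincreasing sequence of nonnegative reals and let r ≥ 1 be an integer, with M a multiple of r, M = Kr with K ≥ 2. For i = 0, 1, …, K−1 let h_i = (a_{ir+1}, …, a_{(i+1)r}) be the i-th consecutive block of length r. Then √r · Σ_{i=2}^{K−1} ‖h_i‖₂ ≤ Σ_{i=2}^{K−1} ‖h_i‖₁ + (1/4)‖h₁‖₁. -/

import Mathlib

open Finset

/-- The `j`-th largest singular value (1-indexed) of a real matrix `A`, defined as the
`j`-th largest square root of an eigenvalue of `Aᵀ * A`; zero if `j` is out of range. -/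
noncomputable def sval {m n : Type*} [Fintype m] [Fintype n] [DecidableEq n]
    (A : Matrix m n ℝ) (j : ℕ) : ℝ :=
  let ev : Fin (Fintype.card n) → ℝ := fun i =>
    Real.sqrt ((show (A.transpose * A).IsHermitian from
      Matrix.isHermitian_conjTranspose_mul_self A).eigenvalues
      ((Fintype.equivFin n).symm i))
  if h : 1 ≤ j ∧ j ≤ Fintype.card n then
    ev (Tuple.sort ev ⟨Fintype.card n - j, by omega⟩)
  else 0

/-- The trace (nuclear) norm of a real matrix: the sum of its singular values. -/
noncomputable def nuclearNorm {m n : Type*} [Fintype m] [Fintype n] [DecidableEq n]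
    (A : Matrix m n ℝ) : ℝ :=
  ∑ j ∈ Finset.Icc 1 (min (Fintype.card m) (Fintype.card n)), sval A j

/-- The Frobenius norm of a real matrix. -/
noncomputable def matFrobNorm {m n : Type*} [Fintype m] [Fintype n]
    (A : Matrix m n ℝ) : ℝ :=
  Real.sqrt (∑ i, ∑ j, (A i j) ^ 2)

/-- The mode-`n` unfolding of an `N`-way tensor. -/
def tunfold {N : ℕ} {I : Fin N → ℕ} (X : (∀ n, Fin (I n)) → ℝ) (n : Fin N) :
    Matrix (Fin (I n)) (∀ k : {k : Fin N // k ≠ n}, Fin (I k.1)) ℝ :=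
  Matrix.of fun i c =>
    X (fun k => if h : k = n then cast (congrArg (fun t => Fin (I t)) h.symm) i else c ⟨k, h⟩)

/-- The tensor trace norm: the average of the nuclear norms of the mode-`n` unfoldings. -/
noncomputable def tensorNuclearNorm {N : ℕ} {I : Fin N → ℕ} (X : (∀ n, Fin (I n)) → ℝ) : ℝ :=
  (1 / (N : ℝ)) * ∑ n : Fin N, nuclearNorm (tunfold X n)

/-- The Frobenius norm of a tensor. -/
noncomputable def tensorFrobNorm {N : ℕ} {I : Fin N → ℕ} (X : (∀ n, Fin (I n)) → ℝ) : ℝ :=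
  Real.sqrt (∑ t, X t ^ 2)

/-! The entries of the block `h_i` lie between `a_{(i+1)r}` and `a_{ir}`, and for a vector
`x ∈ [b, B]ⁿ` with `b ≥ 0` the defect `√n ‖x‖₂ - ‖x‖₁` is at most `n (B - b) / 4`. Summed over
`i = 2, …, K-1` these bounds telescope to `r a_{2r} / 4`, which is at most `‖h₁‖₁ / 4` since
`a_{2r}` is the smallest entry of `h₁`. -/

theorem sum_sq_le_of_mem_Icc {ι : Type*} (s : Finset ι) {f : ι → ℝ} {b B : ℝ}
    (hf : ∀ j ∈ s, f j ∈ Set.Icc b B) :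
    ∑ j ∈ s, f j ^ 2 ≤ (B + b) * ∑ j ∈ s, f j - #s * (B * b) := by
  have hprod : 0 ≤ ∑ j ∈ s, (B - f j) * (f j - b) :=
    sum_nonneg fun j hj => mul_nonneg (sub_nonneg.2 (hf j hj).2) (sub_nonneg.2 (hf j hj).1)
  have hexpand : ∑ j ∈ s, (B - f j) * (f j - b) =
      (B + b) * ∑ j ∈ s, f j - ∑ j ∈ s, f j ^ 2 - #s * (B * b) := by
    rw [mul_sum, ← sum_sub_distrib, ← nsmul_eq_mul, ← sum_const, ← sum_sub_distrib]
    exact sum_congr rfl fun j _ => by ring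
  linarith

theorem sqrt_card_mul_sqrt_sum_sq_le {ι : Type*} (s : Finset ι) {f : ι → ℝ} {b B : ℝ}
    (hb : 0 ≤ b) (hbB : b ≤ B) (hf : ∀ j ∈ s, f j ∈ Set.Icc b B) :
    √(#s : ℝ) * √(∑ j ∈ s, f j ^ 2) ≤ ∑ j ∈ s, f j + #s / 4 * (B - b) := by
  set n : ℝ := (#s : ℝ)
  set S := ∑ j ∈ s, f j
  have hn : 0 ≤ n := Nat.cast_nonneg _
  have hS : 0 ≤ S := sum_nonneg fun j hj => hb.trans (hf j hj).1
  rw [← Real.sqrt_mul hn, Real.sqrt_le_left (by nlinarith)]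
  -- `(S + n (B - b) / 4)² - n ((B + b) S - n B b) = (S - n (B + 3 b) / 4)² + n² b (B - b) / 2`
  nlinarith [mul_le_mul_of_nonneg_left (sum_sq_le_of_mem_Icc s hf) hn,
    sq_nonneg (S - n * (B + 3 * b) / 4),
    mul_nonneg (mul_nonneg (sq_nonneg n) hb) (sub_nonneg.2 hbB)]

theorem sqrt_mul_sqrt_sum_sq_Icc_le_of_antitoneOn {a : ℕ → ℝ} {m r : ℕ}
    (ha : AntitoneOn a (Set.Icc m (m + r))) (h0 : 0 ≤ a (m + r)) :
    √(r : ℝ) * √(∑ j ∈ Icc (m + 1) (m + r), a j ^ 2) ≤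
      ∑ j ∈ Icc (m + 1) (m + r), a j + r / 4 * (a m - a (m + r)) := by
  have hcard : #(Icc (m + 1) (m + r)) = r := by simp
  have hmem : ∀ j ∈ Icc (m + 1) (m + r), j ∈ Set.Icc m (m + r) := fun j hj => by
    simp only [mem_Icc] at hj
    exact ⟨by omega, hj.2⟩
  have hends : m ∈ Set.Icc m (m + r) ∧ m + r ∈ Set.Icc m (m + r) := by simp
  simpa only [hcard] using sqrt_card_mul_sqrt_sum_sq_le _ h0 (ha hends.1 hends.2 (by omega))
    fun j hj => ⟨ha (hmem j hj) hends.2 (hmem j hj).2, ha hends.1 (hmem j hj) (hmem j hj).1⟩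

theorem mul_le_sum_Icc_of_antitoneOn {a : ℕ → ℝ} {m r : ℕ}
    (ha : AntitoneOn a (Set.Icc (m + 1) (m + r))) :
    r * a (m + r) ≤ ∑ j ∈ Icc (m + 1) (m + r), a j := by
  have hcard : #(Icc (m + 1) (m + r)) = r := by simp
  have := card_nsmul_le_sum (Icc (m + 1) (m + r)) a _ fun j hj => by
    rw [mem_Icc] at hj
    exact ha hj ⟨by omega, le_rfl⟩ hj.2
  rwa [hcard, nsmul_eq_mul] at this

/-- Block bound for a nonincreasing nonnegative sequence split into `K` consecutive
blocks of length `r`: `√r · Σ_{i=2}^{K-1} ‖h_i‖₂ ≤ Σ_{i=2}^{K-1} ‖h_i‖₁ + ‖h₁‖₁/4`. -/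
theorem block_l2_sum_le_of_antitone
    (K r : ℕ) (hr : 1 ≤ r) (hK : 2 ≤ K) (a : ℕ → ℝ)
    (hmono : ∀ j, 1 ≤ j → j < K * r → a (j + 1) ≤ a j)
    (hnonneg : ∀ j, 1 ≤ j → j ≤ K * r → 0 ≤ a j) :
    Real.sqrt (r : ℝ) *
        ∑ i ∈ Finset.Icc 2 (K - 1),
          Real.sqrt (∑ j ∈ Finset.Icc (i * r + 1) ((i + 1) * r), a j ^ 2) ≤
      (∑ i ∈ Finset.Icc 2 (K - 1), ∑ j ∈ Finset.Icc (i * r + 1) ((i + 1) * r), a j)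
        + (1 / 4) * ∑ j ∈ Finset.Icc (r + 1) (2 * r), a j := by
  have hanti : AntitoneOn a (Set.Icc 1 (K * r)) :=
    antitoneOn_of_succ_le Set.ordConnected_Icc fun j _ hj hj' => by
      rw [Order.succ_eq_add_one] at hj'
      exact hmono j hj.1 hj'.2
  have hblock : ∀ i ∈ Icc 2 (K - 1),
      √(r : ℝ) * √(∑ j ∈ Icc (i * r + 1) ((i + 1) * r), a j ^ 2) ≤
        ∑ j ∈ Icc (i * r + 1) ((i + 1) * r), a j + r / 4 * (a (i * r) - a ((i + 1) * r)) := by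
    intro i hi
    rw [mem_Icc] at hi
    have hiK : (i + 1) * r ≤ K * r := Nat.mul_le_mul_right r (by omega)
    have hir : 1 ≤ i * r := Nat.one_le_iff_ne_zero.2 (Nat.mul_ne_zero (by omega) (by omega))
    rw [add_one_mul] at hiK ⊢
    exact sqrt_mul_sqrt_sum_sq_Icc_le_of_antitoneOn
      (hanti.mono (Set.Icc_subset_Icc hir hiK)) (hnonneg _ (by omega) hiK)
  have htelescope :
      ∑ i ∈ Icc 2 (K - 1), (a (i * r) - a ((i + 1) * r)) = a (2 * r) - a (K * r) := by
    have hKmin : ¬IsMin K := by rw [isMin_iff_eq_bot, Nat.bot_eq_zero]; omega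
    rw [Icc_sub_one_right_eq_Ico_of_not_isMin hKmin, ← neg_sub,
      ← sum_Ico_sub (f := fun i => a (i * r)) hK, ← sum_neg_distrib]
    simp only [neg_sub]
  have hfirst : r * a (2 * r) ≤ ∑ j ∈ Icc (r + 1) (2 * r), a j := by
    rw [two_mul]
    exact mul_le_sum_Icc_of_antitoneOn (hanti.mono (Set.Icc_subset_Icc (by omega)
      (two_mul r ▸ Nat.mul_le_mul_right r hK)))
  have hlast : 0 ≤ r * a (K * r) :=
    mul_nonneg r.cast_nonneg (hnonneg _ (by nlinarith) le_rfl)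
  calc √(r : ℝ) * ∑ i ∈ Icc 2 (K - 1), √(∑ j ∈ Icc (i * r + 1) ((i + 1) * r), a j ^ 2)
      ≤ ∑ i ∈ Icc 2 (K - 1), (∑ j ∈ Icc (i * r + 1) ((i + 1) * r), a j
          + r / 4 * (a (i * r) - a ((i + 1) * r))) := by
        rw [mul_sum]
        exact sum_le_sum hblock
    _ = (∑ i ∈ Icc 2 (K - 1), ∑ j ∈ Icc (i * r + 1) ((i + 1) * r), a j)
          + r / 4 * (a (2 * r) - a (K * r)) := by
        rw [sum_add_distrib, ← mul_sum, htelescope]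
    _ ≤ _ := by linarith
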